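/- Let T be large, let 2 ≤ x ≤ T, and let k be a natural number such that x^k ≤ T/log T. For any complex numbers a(p) indexed by primes p, ∫_T^{2T} |Σ_{p ≤ x} a(p)·p^{−(1/2+it)}|^{2k} dt ≪ k! · T · (Σ_{p ≤ x} |a(p)|²/p)^k, where the sums are over primes p and the implied constant is absolute. -/

import Mathlib

open Complex Real Filter MeasureTheory
open scoped Classical

/-- The multiplicity of `z` as a zero of `f` (0 if `f` is not analytic at `z`). -/
noncomputable def zeroMult (f : ℂ → ℂ) (z : ℂ) : ℕ :=
  if h : AnalyticAt ℂ f z then (analyticOrderAt f z).toNat else 0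

/-- The logarithmic derivative `ζ'/ζ` of the Riemann zeta function. -/
noncomputable def zetaLogDeriv (s : ℂ) : ℂ := deriv riemannZeta s / riemannZeta s

/-- `γ` enumerates, with multiplicity and in nondecreasing order, the ordinates of the
nontrivial zeros of the Riemann zeta function in the upper half-plane (on RH these are
exactly the zeros `1/2 + iγ` with `γ > 0`). -/
def IsZetaZeroSeq (γ : ℕ → ℝ) : Prop :=
  Monotone γ ∧
  (∀ n, 0 < γ n ∧ riemannZeta (1 / 2 + γ n * Complex.I) = 0) ∧
  (∀ t : ℝ, 0 < t → riemannZeta (1 / 2 + t * Complex.I) = 0 →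
    Nat.card {n | γ n = t} = zeroMult riemannZeta (1 / 2 + t * Complex.I))

/-- `B`, `G` enumerate, with multiplicity and in nondecreasing order of imaginary part,
the zeros `β' + iγ'` of `ζ'` with imaginary part at least `10`. -/
def IsZetaDerivZeroSeq (B G : ℕ → ℝ) : Prop :=
  Monotone G ∧
  (∀ j, 10 ≤ G j ∧ deriv riemannZeta (B j + G j * Complex.I) = 0) ∧
  (∀ s : ℂ, 10 ≤ s.im → deriv riemannZeta s = 0 →
    Nat.card {j | (B j : ℂ) + G j * Complex.I = s} = zeroMult (deriv riemannZeta) s)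

/-- `N(t)`: the number of zeros of `ζ` with `0 < Im s < t`, counted with multiplicity. -/
noncomputable def zetaN (t : ℝ) : ℝ :=
  ∑' s : {s : ℂ | riemannZeta s = 0 ∧ 0 < s.im ∧ s.im < t},
    (zeroMult riemannZeta s : ℝ)

/-- `N(γ, l₁, l₂)` from the paper. -/
noncomputable def zetaNgap (Cstar : ℝ) (γ : ℝ) (l₁ l₂ : ℤ) : ℝ :=
  zetaN (γ + l₂ * Cstar * Real.log (Real.log γ) / Real.log γ)
    - zetaN (γ + l₁ * Cstar * Real.log (Real.log γ) / Real.log γ)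
    - (l₂ - l₁) * Cstar * Real.log (Real.log γ) / (2 * π)

/-- `γ n` is the ordinate of a zero of `ζ` closest to `ρ'` (among the zeros `1/2 + iγ m`),
with ties broken by taking the zero nearer to the origin. -/
def IsNearestZetaZeroOrdinate (γ : ℕ → ℝ) (ρ' : ℂ) (n : ℕ) : Prop :=
  (∀ m, ‖ρ' - (1 / 2 + γ n * Complex.I)‖ ≤ ‖ρ' - (1 / 2 + γ m * Complex.I)‖) ∧
  (∀ m, ‖ρ' - (1 / 2 + γ m * Complex.I)‖ = ‖ρ' - (1 / 2 + γ n * Complex.I)‖ → γ n ≤ γ m)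

/-- Condition (i): the gaps `γ_{n+m} - γ_{n+m-1}` for `0 < |m| ≤ 4 C* ⌊log log T⌋`
are all at least `ε / (2 log γ_n)` (indices are 0-based). -/
def WellSpacedAt (γ : ℕ → ℝ) (ε Cstar T : ℝ) (n : ℕ) : Prop :=
  ∀ m : ℤ, m ≠ 0 → (m.natAbs : ℝ) ≤ 4 * Cstar * (⌊Real.log (Real.log T)⌋ : ℝ) →
    1 ≤ (n : ℤ) + m →
    γ ((n : ℤ) + m).toNat - γ ((n : ℤ) + m - 1).toNat ≥ ε / (2 * Real.log (γ n))

/-- Condition (ii): `N(γc, l₁, l₂) ≤ C log log T` for all admissible `l₁ < l₂`. -/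
def NgapBoundedAt (Cstar C T γc : ℝ) : Prop :=
  ∀ l₁ l₂ : ℤ, l₁ < l₂ →
    (l₁.natAbs : ℝ) ≤ Real.log T / (Cstar * Real.log (Real.log T)) →
    (l₂.natAbs : ℝ) ≤ Real.log T / (Cstar * Real.log (Real.log T)) →
    zetaNgap Cstar γc l₁ l₂ ≤ C * Real.log (Real.log T)

/-- `M_{γ_c}` from the paper: the sum of `1/(γ - γ')` over ordinates `γ` of zeros of `ζ`
(with multiplicity) with `0 < |γ - γ_c| ≤ C* log log γ_c / log γ_c`. -/
noncomputable def Mgamma (γ : ℕ → ℝ) (Cstar γc γ' : ℝ) : ℝ :=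
  ∑' n : {n : ℕ | 0 < |γ n - γc| ∧
      |γ n - γc| ≤ Cstar * Real.log (Real.log γc) / Real.log γc},
    1 / (γ (n : ℕ) - γ')

/-!
Expanding the `k`-th power, `(∑_{p ≤ x} a(p) p^{-s})^k = ∑_{n ≤ x^k} b(n) n^{-s}` where `b(n)` sums
`∏ a(pᵢ)` over the ordered `k`-tuples of primes with product `n`. By unique factorisation at most
`k!` tuples share a product, so Cauchy–Schwarz gives `∑ |b(n)|²/n ≤ k! (∑ |a(p)|²/p)^k`.
The mean value theorem `∫_T^{2T} |∑_{n ≤ N} c(n) n^{-it}|² dt ≤ (T + 4N(1 + log N)) ∑ |c(n)|²`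
then concludes, since `N ≤ x^k ≤ T / log T`. It comes from expanding the square: the diagonal
contributes `T`, an off-diagonal pair at most `2 / |log(m/n)| ≤ 2N / |m - n|`, and the weights
`|c(m) c(n)| ≤ (|c(m)|² + |c(n)|²) / 2` reduce the double sum to row sums of this kernel.
-/

open Finset
open scoped Nat

theorem exists_perm_eq_comp_of_perm_ofFn {α : Type*} [LinearOrder α] {k : ℕ} {f g : Fin k → α}
    (h : (List.ofFn f).Perm (List.ofFn g)) : ∃ σ : Equiv.Perm (Fin k), f = g ∘ σ := by
  have hsorted : f ∘ Tuple.sort f = g ∘ Tuple.sort g :=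
    List.ofFn_injective <| List.Perm.eq_of_sortedLE
      (List.sortedLE_ofFn_iff.mpr (Tuple.monotone_sort f))
      (List.sortedLE_ofFn_iff.mpr (Tuple.monotone_sort g))
      (((Equiv.Perm.ofFn_comp_perm _ f).trans h).trans (Equiv.Perm.ofFn_comp_perm _ g).symm)
  refine ⟨(Tuple.sort f).symm.trans (Tuple.sort g), funext fun i => ?_⟩
  simpa using congrFun hsorted ((Tuple.sort f).symm i)

theorem card_filter_prod_eq_le_factorial {P : Finset ℕ} (hP : ∀ p ∈ P, p.Prime) (k n : ℕ) :
    #{g ∈ Fintype.piFinset (fun _ : Fin k => P) | ∏ i, g i = n} ≤ k ! := by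
  set F := {g ∈ Fintype.piFinset (fun _ : Fin k => P) | ∏ i, g i = n}
  have hfactors : ∀ g ∈ F, (List.ofFn g).Perm n.primeFactorsList := by
    intro g hg
    rw [mem_filter, Fintype.mem_piFinset] at hg
    refine Nat.primeFactorsList_unique (by rw [List.prod_ofFn, hg.2]) fun p hp => ?_
    obtain ⟨i, rfl⟩ := List.mem_ofFn.mp hp
    exact hP _ (hg.1 i)
  rcases F.eq_empty_or_nonempty with hF | ⟨g₀, hg₀⟩
  · simp [hF]
  calc #F ≤ #(univ.image fun σ : Equiv.Perm (Fin k) => g₀ ∘ σ) := by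
        refine card_le_card fun g hg => ?_
        obtain ⟨σ, rfl⟩ := exists_perm_eq_comp_of_perm_ofFn
          ((hfactors g hg).trans (hfactors g₀ hg₀).symm)
        exact mem_image_of_mem _ (mem_univ σ)
    _ ≤ #(univ : Finset (Equiv.Perm (Fin k))) := card_image_le
    _ = k ! := by simp [Fintype.card_perm]

noncomputable def dirichletPowCoeff (P : Finset ℕ) (a : ℕ → ℂ) (k n : ℕ) : ℂ :=
  ∑ g ∈ Fintype.piFinset (fun _ : Fin k => P) with ∏ i, g i = n, ∏ i, a (g i)

theorem norm_dirichletPowCoeff_sq_le {P : Finset ℕ} (hP : ∀ p ∈ P, p.Prime) (a : ℕ → ℂ)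
    (k n : ℕ) :
    ‖dirichletPowCoeff P a k n‖ ^ 2 ≤
      k ! * ∑ g ∈ Fintype.piFinset (fun _ : Fin k => P) with ∏ i, g i = n,
        ∏ i, ‖a (g i)‖ ^ 2 := by
  set F := {g ∈ Fintype.piFinset (fun _ : Fin k => P) | ∏ i, g i = n}
  calc ‖dirichletPowCoeff P a k n‖ ^ 2 ≤ (∑ g ∈ F, ‖∏ i, a (g i)‖) ^ 2 := by
        gcongr; exact norm_sum_le _ _
    _ ≤ #F * ∑ g ∈ F, ‖∏ i, a (g i)‖ ^ 2 := sq_sum_le_card_mul_sum_sq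
    _ ≤ k ! * ∑ g ∈ F, ∏ i, ‖a (g i)‖ ^ 2 := by
        simp only [norm_prod, prod_pow]
        gcongr
        exact_mod_cast card_filter_prod_eq_le_factorial hP k n

theorem prod_mem_Icc_of_mem_piFinset {P : Finset ℕ} {M k : ℕ} (hP : ∀ p ∈ P, 0 < p ∧ p ≤ M)
    {g : Fin k → ℕ} (hg : g ∈ Fintype.piFinset fun _ => P) : ∏ i, g i ∈ Icc 1 (M ^ k) := by
  rw [Fintype.mem_piFinset] at hg
  refine mem_Icc.mpr ⟨one_le_prod' fun i _ => (hP _ (hg i)).1, ?_⟩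
  calc ∏ i, g i ≤ ∏ _i : Fin k, M := prod_le_prod' fun i _ => (hP _ (hg i)).2
    _ = M ^ k := by simp

theorem natCast_prod_cpow {ι : Type*} (s : Finset ι) (f : ι → ℕ) (z : ℂ) :
    ((∏ i ∈ s, f i : ℕ) : ℂ) ^ z = ∏ i ∈ s, (f i : ℂ) ^ z := by
  induction s using Finset.cons_induction with
  | empty => simp
  | cons i s hi ih =>
    rw [prod_cons, prod_cons, Nat.cast_mul, Complex.natCast_mul_natCast_cpow, ih]

theorem sum_mul_natCast_cpow_pow_eq {P : Finset ℕ} {M : ℕ} (hP : ∀ p ∈ P, 0 < p ∧ p ≤ M) (a : ℕ → ℂ)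
    (k : ℕ) (z : ℂ) :
    (∑ p ∈ P, a p * (p : ℂ) ^ z) ^ k =
      ∑ n ∈ Icc 1 (M ^ k), dirichletPowCoeff P a k n * (n : ℂ) ^ z := by
  calc (∑ p ∈ P, a p * (p : ℂ) ^ z) ^ k
      = ∑ g ∈ Fintype.piFinset (fun _ : Fin k => P),
          (∏ i, a (g i)) * ((∏ i, g i : ℕ) : ℂ) ^ z := by
        rw [← Fin.prod_const, prod_univ_sum]
        simp only [prod_mul_distrib, natCast_prod_cpow]
    _ = ∑ n ∈ Icc 1 (M ^ k), dirichletPowCoeff P a k n * (n : ℂ) ^ z := by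
        rw [← sum_fiberwise_of_maps_to fun g hg => prod_mem_Icc_of_mem_piFinset hP hg]
        refine sum_congr rfl fun n _ => ?_
        rw [dirichletPowCoeff, sum_mul]
        exact sum_congr rfl fun g hg => by rw [(mem_filter.mp hg).2]

theorem sum_norm_dirichletPowCoeff_sq_div_le {P : Finset ℕ} {M : ℕ}
    (hP : ∀ p ∈ P, p.Prime ∧ p ≤ M) (a : ℕ → ℂ) (k : ℕ) :
    ∑ n ∈ Icc 1 (M ^ k), ‖dirichletPowCoeff P a k n‖ ^ 2 / n ≤
      k ! * (∑ p ∈ P, ‖a p‖ ^ 2 / p) ^ k := by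
  have hP' : ∀ p ∈ P, 0 < p ∧ p ≤ M := fun p hp => ⟨(hP p hp).1.pos, (hP p hp).2⟩
  calc ∑ n ∈ Icc 1 (M ^ k), ‖dirichletPowCoeff P a k n‖ ^ 2 / n
      ≤ ∑ n ∈ Icc 1 (M ^ k), (k ! * ∑ g ∈ Fintype.piFinset (fun _ : Fin k => P) with
          ∏ i, g i = n, ∏ i, ‖a (g i)‖ ^ 2) / n := by
        gcongr with n
        exact norm_dirichletPowCoeff_sq_le (fun p hp => (hP p hp).1) a k n
    _ = k ! * ∑ n ∈ Icc 1 (M ^ k), ∑ g ∈ Fintype.piFinset (fun _ : Fin k => P) with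
          ∏ i, g i = n, ∏ i, ‖a (g i)‖ ^ 2 / g i := by
        simp only [mul_div_assoc, ← mul_sum, sum_div]
        refine congrArg _ (sum_congr rfl fun n _ => sum_congr rfl fun g hg => ?_)
        rw [prod_div_distrib, ← (mem_filter.mp hg).2, Nat.cast_prod]
    _ = k ! * (∑ p ∈ P, ‖a p‖ ^ 2 / p) ^ k := by
        rw [sum_fiberwise_of_maps_to fun g hg => prod_mem_Icc_of_mem_piFinset hP' hg,
          ← Fin.prod_const, prod_univ_sum]

theorem abs_sub_div_le_abs_log_sub {x y N : ℝ} (hx : 0 < x) (hy : 0 < y) (hxN : x ≤ N)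
    (hyN : y ≤ N) : |x - y| / N ≤ |Real.log x - Real.log y| := by
  wlog hxy : x ≤ y generalizing x y
  · rw [abs_sub_comm, abs_sub_comm (Real.log x)]
    exact this hy hx hyN hxN (le_of_not_ge hxy)
  have hlog : 1 - (y / x)⁻¹ ≤ Real.log (y / x) := Real.one_sub_inv_le_log_of_pos (by positivity)
  rw [Real.log_div hy.ne' hx.ne', inv_div] at hlog
  rw [abs_sub_comm x, abs_of_nonneg (sub_nonneg.mpr hxy), abs_sub_comm (Real.log x),
    abs_of_nonneg (sub_nonneg.mpr (Real.log_le_log hx hxy))]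
  calc (y - x) / N ≤ (y - x) / y := div_le_div_of_nonneg_left (by linarith) hy hyN
    _ = 1 - x / y := by field_simp
    _ ≤ Real.log y - Real.log x := hlog

theorem sum_erase_one_div_abs_sub_le {N m : ℕ} (hm : m ∈ Icc 1 N) :
    ∑ n ∈ (Icc 1 N).erase m, 1 / |(m : ℝ) - n| ≤ 2 * (1 + Real.log N) := by
  have hharmonic : ∑ d ∈ Icc 1 N, 1 / (d : ℝ) ≤ 1 + Real.log N := by
    simpa [harmonic_eq_sum_Icc] using harmonic_le_one_add_log N
  have hside : ∀ (s : Finset ℕ) (e : ℕ → ℕ), Set.InjOn e s → (∀ n ∈ s, e n ∈ Icc 1 N) →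
      (∀ n ∈ s, |(m : ℝ) - n| = e n) → ∑ n ∈ s, 1 / |(m : ℝ) - n| ≤ 1 + Real.log N := by
    intro s e he hmaps hdist
    calc ∑ n ∈ s, 1 / |(m : ℝ) - n| = ∑ d ∈ s.image e, 1 / (d : ℝ) := by
          rw [sum_image he]; exact sum_congr rfl fun n hn => by rw [hdist n hn]
      _ ≤ ∑ d ∈ Icc 1 N, 1 / (d : ℝ) := by
          refine sum_le_sum_of_subset_of_nonneg ?_ fun _ _ _ => by positivity
          simpa [subset_iff] using hmaps
      _ ≤ 1 + Real.log N := hharmonic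
  rw [mem_Icc] at hm
  rw [← sum_filter_add_sum_filter_not _ (· < m), two_mul]
  gcongr
  · refine hside _ (m - ·) (fun n hn n' hn' h => ?_) (fun n hn => ?_) fun n hn => ?_ <;>
      simp only [coe_filter, Set.mem_ofPred_eq, mem_filter, mem_erase, mem_Icc] at * <;> try omega
    rw [Nat.cast_sub hn.2.le, abs_of_nonneg (by simpa using hn.2.le)]
  · refine hside _ (· - m) (fun n hn n' hn' h => ?_) (fun n hn => ?_) fun n hn => ?_ <;>
      simp only [coe_filter, Set.mem_ofPred_eq, mem_filter, mem_erase, mem_Icc] at * <;> try omega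
    have hmn : m ≤ n := by omega
    rw [Nat.cast_sub hmn, abs_sub_comm, abs_of_nonneg (by simpa using hmn)]

theorem norm_setIntegral_exp_mul_I_le {θ : ℝ} (hθ : θ ≠ 0) {T₁ T₂ : ℝ} (hT : T₁ ≤ T₂) :
    ‖∫ t in Set.Ioc T₁ T₂, cexp (θ * I * t)‖ ≤ 2 / |θ| := by
  have hc : (θ : ℂ) * I ≠ 0 := mul_ne_zero (ofReal_ne_zero.mpr hθ) I_ne_zero
  have hunit : ∀ t : ℝ, ‖cexp (θ * I * t)‖ = 1 := fun t => by
    rw [norm_exp]; simp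
  rw [← intervalIntegral.integral_of_le hT, integral_exp_mul_complex hc, norm_div, norm_mul,
    norm_I, mul_one, norm_real, Real.norm_eq_abs]
  gcongr
  calc ‖cexp (θ * I * T₂) - cexp (θ * I * T₁)‖ ≤ ‖cexp (θ * I * T₂)‖ + ‖cexp (θ * I * T₁)‖ :=
        norm_sub_le _ _
    _ = 2 := by rw [hunit, hunit]; norm_num

open ComplexConjugate in
theorem integral_norm_sum_mul_exp_sq_le {ι : Type*} (s : Finset ι) (b : ι → ℂ) (ω : ι → ℝ)
    (T₁ T₂ : ℝ) :
    ∫ t in Set.Ioc T₁ T₂, ‖∑ i ∈ s, b i * cexp (ω i * I * t)‖ ^ 2 ≤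
      ∑ i ∈ s, ∑ j ∈ s,
        ‖b i‖ * ‖b j‖ * ‖∫ t in Set.Ioc T₁ T₂, cexp ((ω i - ω j : ℝ) * I * t)‖ := by
  have hexpand : ∀ t : ℝ, ((‖∑ i ∈ s, b i * cexp (ω i * I * t)‖ ^ 2 : ℝ) : ℂ) =
      ∑ i ∈ s, ∑ j ∈ s, b i * conj (b j) * cexp ((ω i - ω j : ℝ) * I * t) := by
    intro t
    rw [ofReal_pow, ← mul_conj', map_sum, sum_mul_sum]
    refine sum_congr rfl fun i _ => sum_congr rfl fun j _ => ?_
    rw [map_mul, ← exp_conj, mul_mul_mul_comm, ← Complex.exp_add]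
    simp only [map_mul, conj_ofReal, conj_I, ofReal_sub]
    ring_nf
  have hint : ∀ i j, IntegrableOn
      (fun t : ℝ => b i * conj (b j) * cexp ((ω i - ω j : ℝ) * I * t)) (Set.Ioc T₁ T₂) :=
    fun i j => (by fun_prop : Continuous _).integrableOn_Ioc
  have hcomplex : ((∫ t in Set.Ioc T₁ T₂, ‖∑ i ∈ s, b i * cexp (ω i * I * t)‖ ^ 2 : ℝ) : ℂ) =
      ∑ i ∈ s, ∑ j ∈ s, b i * conj (b j) *
        ∫ t in Set.Ioc T₁ T₂, cexp ((ω i - ω j : ℝ) * I * t) := by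
    rw [← integral_complex_ofReal]
    simp_rw [hexpand]
    rw [integral_finsetSum _ fun i _ => integrable_finsetSum _ fun j _ => hint i j]
    refine sum_congr rfl fun i _ => ?_
    rw [integral_finsetSum _ fun j _ => hint i j]
    exact sum_congr rfl fun j _ => integral_const_mul _ _
  calc ∫ t in Set.Ioc T₁ T₂, ‖∑ i ∈ s, b i * cexp (ω i * I * t)‖ ^ 2
      ≤ ‖((∫ t in Set.Ioc T₁ T₂, ‖∑ i ∈ s, b i * cexp (ω i * I * t)‖ ^ 2 : ℝ) : ℂ)‖ := by
        rw [norm_real]; exact Real.le_norm_self _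
    _ ≤ ∑ i ∈ s, ∑ j ∈ s,
          ‖b i * conj (b j) * ∫ t in Set.Ioc T₁ T₂, cexp ((ω i - ω j : ℝ) * I * t)‖ := by
        rw [hcomplex]
        exact (norm_sum_le _ _).trans (sum_le_sum fun i _ => norm_sum_le _ _)
    _ = _ := by simp only [norm_mul, RCLike.norm_conj]

theorem sum_sum_mul_mul_le_sum_sq_mul_sum {ι : Type*} (s : Finset ι) (u : ι → ℝ)
    {K : ι → ι → ℝ} (hK : ∀ i j, 0 ≤ K i j) (hsymm : ∀ i j, K i j = K j i) :
    ∑ i ∈ s, ∑ j ∈ s, u i * u j * K i j ≤ ∑ i ∈ s, u i ^ 2 * ∑ j ∈ s, K i j := by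
  calc ∑ i ∈ s, ∑ j ∈ s, u i * u j * K i j
      ≤ ∑ i ∈ s, ∑ j ∈ s, (u i ^ 2 * K i j + u j ^ 2 * K j i) / 2 := by
        gcongr with i _ j _
        rw [hsymm j i]
        nlinarith [mul_nonneg (sq_nonneg (u i - u j)) (hK i j)]
    _ = ∑ i ∈ s, u i ^ 2 * ∑ j ∈ s, K i j := by
        simp only [add_div, sum_add_distrib]
        rw [sum_comm (f := fun i j => u j ^ 2 * K j i / 2)]
        simp only [mul_sum, ← add_div, ← sum_add_distrib]
        exact sum_congr rfl fun i _ => sum_congr rfl fun j _ => by ring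

theorem integral_norm_sum_mul_natCast_cpow_sq_le (N : ℕ) (b : ℕ → ℂ) {T₁ T₂ : ℝ}
    (hT : T₁ ≤ T₂) :
    ∫ t in Set.Ioc T₁ T₂, ‖∑ n ∈ Icc 1 N, b n * (n : ℂ) ^ (-(t * I))‖ ^ 2 ≤
      (T₂ - T₁ + 4 * N * (1 + Real.log N)) * ∑ n ∈ Icc 1 N, ‖b n‖ ^ 2 := by
  set K : ℕ → ℕ → ℝ := fun m n => if m = n then T₂ - T₁ else 2 * N / |(m : ℝ) - n|
  have hpos : ∀ n ∈ Icc 1 N, (0 : ℝ) < n := fun n hn => by exact_mod_cast (mem_Icc.mp hn).1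
  have hle : ∀ n ∈ Icc 1 N, (n : ℝ) ≤ N := fun n hn => by exact_mod_cast (mem_Icc.mp hn).2
  have hcpow : ∀ n ∈ Icc 1 N, ∀ t : ℝ,
      (n : ℂ) ^ (-(t * I)) = cexp ((-Real.log n : ℝ) * I * t) := fun n hn t => by
    rw [cpow_def_of_ne_zero (by exact_mod_cast (hpos n hn).ne'), ← ofReal_natCast,
      ← ofReal_log (hpos n hn).le]
    push_cast; ring_nf
  have hkernel : ∀ m ∈ Icc 1 N, ∀ n ∈ Icc 1 N,
      ‖∫ t in Set.Ioc T₁ T₂, cexp ((-Real.log m - -Real.log n : ℝ) * I * t)‖ ≤ K m n := by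
    intro m hm n hn
    by_cases hmn : m = n
    · subst hmn
      simp only [K, if_pos rfl, sub_self, ofReal_zero, zero_mul, Complex.exp_zero,
        setIntegral_const, Real.volume_real_Ioc_of_le hT]
      rw [norm_smul, norm_one, mul_one, Real.norm_of_nonneg (sub_nonneg.mpr hT)]
    have hlog : Real.log m ≠ Real.log n := fun h => hmn <| by
      exact_mod_cast Real.log_injOn_pos (hpos m hm) (hpos n hn) h
    have hgap := abs_sub_div_le_abs_log_sub (hpos m hm) (hpos n hn) (hle m hm) (hle n hn)
    have hdist : 0 < |(m : ℝ) - n| := abs_pos.mpr (sub_ne_zero.mpr (by exact_mod_cast hmn))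
    refine (norm_setIntegral_exp_mul_I_le (by intro h; apply hlog; linarith) hT).trans ?_
    rw [show -Real.log m - -Real.log n = -(Real.log m - Real.log n) by ring, abs_neg]
    simp only [K, if_neg hmn]
    calc 2 / |Real.log m - Real.log n| ≤ 2 / (|(m : ℝ) - n| / N) := by
          gcongr
          exact div_pos hdist (by linarith [hpos m hm, hle m hm])
      _ = 2 * N / |(m : ℝ) - n| := by rw [div_div_eq_mul_div]
  have hrow : ∀ m ∈ Icc 1 N, ∑ n ∈ Icc 1 N, K m n ≤ T₂ - T₁ + 4 * N * (1 + Real.log N) := by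
    intro m hm
    rw [← add_sum_erase _ _ hm]
    simp only [K, if_pos rfl]
    rw [sum_congr rfl fun n hn => if_neg (ne_of_mem_erase hn).symm]
    simp only [div_eq_mul_one_div (2 * (N : ℝ)), ← mul_sum]
    have := sum_erase_one_div_abs_sub_le hm
    nlinarith [mul_le_mul_of_nonneg_left this (by positivity : (0 : ℝ) ≤ 2 * N)]
  calc ∫ t in Set.Ioc T₁ T₂, ‖∑ n ∈ Icc 1 N, b n * (n : ℂ) ^ (-(t * I))‖ ^ 2
      = ∫ t in Set.Ioc T₁ T₂,
          ‖∑ n ∈ Icc 1 N, b n * cexp ((-Real.log n : ℝ) * I * t)‖ ^ 2 := by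
        congr with t
        rw [sum_congr rfl fun n hn => by rw [hcpow n hn t]]
    _ ≤ ∑ m ∈ Icc 1 N, ∑ n ∈ Icc 1 N, ‖b m‖ * ‖b n‖ * K m n := by
        refine (integral_norm_sum_mul_exp_sq_le _ _ _ _ _).trans ?_
        gcongr with m hm n hn
        exact hkernel m hm n hn
    _ ≤ ∑ m ∈ Icc 1 N, ‖b m‖ ^ 2 * ∑ n ∈ Icc 1 N, K m n := by
        refine sum_sum_mul_mul_le_sum_sq_mul_sum _ _ (fun m n => ?_) fun m n => ?_
        · simp only [K]; split_ifs <;> [linarith; positivity]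
        · simp only [K, eq_comm, abs_sub_comm]
    _ ≤ ∑ m ∈ Icc 1 N, ‖b m‖ ^ 2 * (T₂ - T₁ + 4 * N * (1 + Real.log N)) := by
        gcongr with m hm
        exact hrow m hm
    _ = _ := by rw [← sum_mul, mul_comm]

theorem integral_norm_sum_prime_mul_cpow_pow_le {P : Finset ℕ} {M : ℕ}
    (hP : ∀ p ∈ P, p.Prime ∧ p ≤ M) (a : ℕ → ℂ) (k : ℕ) {T₁ T₂ : ℝ} (hT : T₁ ≤ T₂) :
    ∫ t in Set.Ioc T₁ T₂, ‖∑ p ∈ P, a p * (p : ℂ) ^ (-(((1 / 2 : ℝ) : ℂ) + t * I))‖ ^ (2 * k) ≤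
      (T₂ - T₁ + 4 * (M ^ k : ℕ) * (1 + Real.log (M ^ k : ℕ))) *
        (k ! * (∑ p ∈ P, ‖a p‖ ^ 2 / p) ^ k) := by
  set b : ℕ → ℂ := fun n => dirichletPowCoeff P a k n * (n : ℂ) ^ (-((1 / 2 : ℝ) : ℂ))
  have hpow : ∀ t : ℝ,
      ‖∑ p ∈ P, a p * (p : ℂ) ^ (-(((1 / 2 : ℝ) : ℂ) + t * I))‖ ^ (2 * k) =
        ‖∑ n ∈ Icc 1 (M ^ k), b n * (n : ℂ) ^ (-(t * I))‖ ^ 2 := fun t => by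
    rw [mul_comm 2 k, pow_mul, ← norm_pow,
      sum_mul_natCast_cpow_pow_eq (fun p hp => ⟨(hP p hp).1.pos, (hP p hp).2⟩)]
    refine congrArg (fun z : ℂ => ‖z‖ ^ 2) (sum_congr rfl fun n hn => ?_)
    have hn : (n : ℂ) ≠ 0 := Nat.cast_ne_zero.mpr (Nat.one_le_iff_ne_zero.mp (mem_Icc.mp hn).1)
    rw [neg_add, cpow_add _ _ hn, mul_assoc]
  have hb : ∑ n ∈ Icc 1 (M ^ k), ‖b n‖ ^ 2 ≤ k ! * (∑ p ∈ P, ‖a p‖ ^ 2 / p) ^ k := by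
    refine le_of_eq_of_le (sum_congr rfl fun n hn => ?_)
      (sum_norm_dirichletPowCoeff_sq_div_le hP a k)
    have hsq : ((n : ℝ) ^ (-((1 / 2 : ℝ) : ℂ)).re) ^ 2 = (n : ℝ)⁻¹ := by
      rw [neg_re, ofReal_re, ← Real.rpow_mul_natCast (Nat.cast_nonneg n)]
      norm_num [Real.rpow_neg_one]
    rw [norm_mul, mul_pow, norm_natCast_cpow_of_pos (mem_Icc.mp hn).1, hsq, div_eq_mul_inv]
  simp_rw [hpow]
  exact (integral_norm_sum_mul_natCast_cpow_sq_le _ b hT).trans (by gcongr)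

/-- **Lemma (Soundararajan).** For `T` large, `2 ≤ x ≤ T`, and a natural number `k` with
`x^k ≤ T/log T`, for any complex numbers `a(p)`,
`∫_T^{2T} |Σ_{p ≤ x} a(p) p^{-1/2-it}|^{2k} dt ≪ k! T (Σ_{p ≤ x} |a(p)|²/p)^k`,
with an absolute implied constant. -/
theorem statement7 :
    ∃ c : ℝ, 0 < c ∧ ∃ T₀ : ℝ, ∀ T : ℝ, T₀ ≤ T → ∀ x : ℝ, 2 ≤ x → x ≤ T →
      ∀ k : ℕ, 0 < k → x ^ k ≤ T / Real.log T → ∀ a : ℕ → ℂ,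
        (∫ t in Set.Ioc T (2 * T),
            ‖∑ p ∈ Finset.filter Nat.Prime (Finset.Iic ⌊x⌋₊),
                a p * (p : ℂ) ^ (-(((1 / 2 : ℝ) : ℂ) + (t : ℝ) * Complex.I))‖ ^ (2 * k)) ≤
          c * (Nat.factorial k) * T *
            (∑ p ∈ Finset.filter Nat.Prime (Finset.Iic ⌊x⌋₊), ‖a p‖ ^ 2 / (p : ℝ)) ^ k := by
  refine ⟨9, by norm_num, 3, fun T hT x hx2 _ k _ hxk a => ?_⟩
  have hP : ∀ p ∈ filter Nat.Prime (Iic ⌊x⌋₊), p.Prime ∧ p ≤ ⌊x⌋₊ := fun p hp => by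
    simpa [and_comm] using hp
  refine (integral_norm_sum_prime_mul_cpow_pow_le hP a k (by linarith)).trans ?_
  have hlogT : 1 ≤ Real.log T := by
    rw [Real.le_log_iff_exp_le (by linarith)]
    linarith [Real.exp_one_lt_d9]
  set N : ℕ := ⌊x⌋₊ ^ k
  have hN : (N : ℝ) * Real.log T ≤ T := by
    rw [← le_div_iff₀ (by linarith)]
    refine le_trans ?_ hxk
    push_cast [N]
    gcongr
    exact Nat.floor_le (by linarith)
  have hlogN : Real.log N ≤ Real.log T := by
    rcases Nat.eq_zero_or_pos N with h | h
    · simp [h]; linarith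
    · exact Real.log_le_log (by exact_mod_cast h) (by nlinarith)
  have hfactor : 2 * T - T + 4 * N * (1 + Real.log N) ≤ 9 * T := by
    nlinarith [Nat.cast_nonneg (α := ℝ) N]
  calc _ ≤ 9 * T * (k ! * (∑ p ∈ filter Nat.Prime (Iic ⌊x⌋₊), ‖a p‖ ^ 2 / p) ^ k) := by gcongr
    _ = _ := by ring
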